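/- arXiv:math/0108164 — 2 statements merged into one kernel-verified Lean document; each statement's English description precedes it below -/
import Mathlib

section
/- For a partition σ of m with beta numbers β_1 > β_2 > ··· > β_L ≥ 0 (where β_i = σ_i + L − i and L ≥ ℓ(σ)), the product of (q^{h} − 1) over all hook lengths h of σ equals (Π_{i=1}^L Π_{k=1}^{β_i}(q^k − 1)) / (Π_{1 ≤ i < j ≤ L}(q^{β_i − β_j} − 1)). -/
/-!
Fix a row `i < L`. The hook lengths of the nodes in row `i` together with the gaps
`β_i - β_k` for `i < k < L` are exactly the numbers `1, …, β_i`, each once: both families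
lie in that range, each is injective, they are disjoint, and there are `σ_i + (L - 1 - i) = β_i`
of them. Multiplying over all rows gives the identity, for any function in place of
`k ↦ q ^ k - 1`.
-/

open Finset

section

variable (σ : ℕ → ℕ) (L : ℕ)

/-- Rows and columns are indexed from `0`, so `β_i = σ_i + (L - 1 - i)`; column lengths count
only the first `L` rows. -/
def colLen (j : ℕ) : ℕ := #{i ∈ range L | j < σ i}

def betaNum (i : ℕ) : ℕ := σ i + (L - 1 - i)

def hookLen (i j : ℕ) : ℕ := σ i + colLen σ L j - (i + j + 1)

variable {σ L}

lemma colLen_le (j : ℕ) : colLen σ L j ≤ L :=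
  (card_filter_le _ _).trans (card_range L).le

lemma colLen_antitone : Antitone (colLen σ L) := fun _ _ h =>
  card_le_card <| monotone_filter_right _ fun _ _ hk => h.trans_lt hk

lemma lt_colLen_iff (hσ : Antitone σ) {i j : ℕ} (hi : i < L) :
    i < colLen σ L j ↔ j < σ i := by
  constructor
  · intro h
    by_contra hji
    have hsub : {k ∈ range L | j < σ k} ⊆ range i := fun k hk => by
      simp only [mem_filter, mem_range] at hk ⊢
      by_contra hik
      exact hji (hk.2.trans_le (hσ (not_lt.mp hik)))
    have := (card_le_card hsub).trans_eq (card_range i)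
    exact absurd h (not_lt.mpr this)
  · intro h
    have hsub : range (i + 1) ⊆ {k ∈ range L | j < σ k} := fun k hk => by
      simp only [mem_filter, mem_range] at hk ⊢
      exact ⟨by omega, h.trans_le (hσ (Nat.lt_succ_iff.mp hk))⟩
    exact (card_range (i + 1)).symm.trans_le (card_le_card hsub)

lemma betaNum_strictAntiOn (hσ : Antitone σ) : StrictAntiOn (betaNum σ L) (Set.Iio L) :=
  fun i _ k hk hik => by
    have := hσ hik.le
    simp only [Set.mem_Iio] at hk
    unfold betaNum
    omega

lemma hookLen_strictAntiOn (hσ : Antitone σ) {i : ℕ} (hi : i < L) :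
    StrictAntiOn (hookLen σ L i) (Set.Iio (σ i)) := fun j₁ _ j₂ hj₂ hj => by
  rw [Set.mem_Iio] at hj₂
  have := (lt_colLen_iff hσ hi).2 hj₂
  have := colLen_antitone (σ := σ) (L := L) hj.le
  unfold hookLen
  omega

lemma hookLen_mem_Icc (hσ : Antitone σ) {i j : ℕ} (hi : i < L) (hj : j < σ i) :
    hookLen σ L i j ∈ Icc 1 (betaNum σ L i) := by
  have := (lt_colLen_iff hσ hi).2 hj
  have := colLen_le (σ := σ) (L := L) j
  simp only [mem_Icc, hookLen, betaNum]
  omega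

lemma betaNum_sub_mem_Icc (hσ : Antitone σ) {i k : ℕ} (hik : i < k) (hk : k < L) :
    betaNum σ L i - betaNum σ L k ∈ Icc 1 (betaNum σ L i) := by
  have := betaNum_strictAntiOn hσ (hik.trans hk) hk hik
  simp only [mem_Icc]
  omega

/-- As integers, `hookLen i j - (β_i - β_k) = (colLen j - 1 - k) + (σ_k - j)`, and by
`lt_colLen_iff` the two summands are `≥ 0, > 0` or `< 0, ≤ 0`. -/
lemma hookLen_ne_betaNum_sub (hσ : Antitone σ) {i j k : ℕ} (hi : i < L) (hj : j < σ i)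
    (hik : i < k) (hk : k < L) : hookLen σ L i j ≠ betaNum σ L i - betaNum σ L k := by
  have := (lt_colLen_iff hσ hi).2 hj
  have := (lt_colLen_iff (j := j) hσ hk)
  have := hσ hik.le
  unfold hookLen betaNum
  omega


lemma disjoint_hookLens_betaGaps (hσ : Antitone σ) {i : ℕ} (hi : i < L) :
    Disjoint ((range (σ i)).image (hookLen σ L i))
      ((Ioo i L).image fun k => betaNum σ L i - betaNum σ L k) := by
  simp only [disjoint_left, mem_image, mem_range, mem_Ioo, not_exists, not_and]
  rintro _ ⟨j, hj, rfl⟩ k ⟨hik, hk⟩ h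
  exact hookLen_ne_betaNum_sub hσ hi hj hik hk h.symm

lemma betaGaps_injOn (hσ : Antitone σ) (i : ℕ) :
    Set.InjOn (fun k => betaNum σ L i - betaNum σ L k) (Set.Ioo i L) := by
  intro k₁ hk₁ k₂ hk₂ h
  have h₁ := betaNum_strictAntiOn hσ (hk₁.1.trans hk₁.2) hk₁.2 hk₁.1
  have h₂ := betaNum_strictAntiOn hσ (hk₂.1.trans hk₂.2) hk₂.2 hk₂.1
  exact (betaNum_strictAntiOn hσ).injOn hk₁.2 hk₂.2 (by simp only at h; omega)

lemma hookLens_union_betaGaps (hσ : Antitone σ) {i : ℕ} (hi : i < L) :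
    (range (σ i)).image (hookLen σ L i) ∪ (Ioo i L).image (fun k => betaNum σ L i - betaNum σ L k)
      = Icc 1 (betaNum σ L i) := by
  refine eq_of_subset_of_card_le ?_ ?_
  · simp only [union_subset_iff, image_subset_iff, mem_range, mem_Ioo]
    exact ⟨fun j hj => hookLen_mem_Icc hσ hi hj, fun k hk => betaNum_sub_mem_Icc hσ hk.1 hk.2⟩
  · rw [card_union_of_disjoint (disjoint_hookLens_betaGaps hσ hi),
      card_image_of_injOn (by simpa using (hookLen_strictAntiOn hσ hi).injOn),
      card_image_of_injOn (by simpa using betaGaps_injOn hσ i)]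
    simp only [Nat.card_Icc, Nat.card_Ioo, card_range, betaNum]
    omega

lemma prod_hookLen_mul_prod_betaGap {M : Type*} [CommMonoid M] (f : ℕ → M)
    (hσ : Antitone σ) {i : ℕ} (hi : i < L) :
    (∏ j ∈ range (σ i), f (hookLen σ L i j)) *
        ∏ k ∈ Ioo i L, f (betaNum σ L i - betaNum σ L k) =
      ∏ k ∈ range (betaNum σ L i), f (k + 1) := by
  rw [← prod_image (f := f) (by simpa using (hookLen_strictAntiOn hσ hi).injOn),
    ← prod_image (f := f) (s := Ioo i L) (by simpa using betaGaps_injOn hσ i),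
    ← prod_union (disjoint_hookLens_betaGaps hσ hi), hookLens_union_betaGaps hσ hi,
    ← Ico_add_one_right_eq_Icc, prod_Ico_eq_prod_range, Nat.add_sub_cancel]
  simp only [add_comm]

end

theorem hook_length_beta_identity_general {R : Type*} [CommRing R] (q : R)
    (σ : ℕ → ℕ) (L : ℕ)
    (hanti : ∀ i j, i ≤ j → σ j ≤ σ i) :
    (∏ i ∈ Finset.range L, ∏ j ∈ Finset.range (σ i),
        (q ^ (σ i + ((Finset.range L).filter (fun i' => j < σ i')).card - (i + j + 1)) - 1)) *
      (∏ i ∈ Finset.range L, ∏ j ∈ Finset.Ioo i L,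
        (q ^ ((σ i + (L - 1 - i)) - (σ j + (L - 1 - j))) - 1))
      = ∏ i ∈ Finset.range L, ∏ k ∈ Finset.range (σ i + (L - 1 - i)),
          (q ^ (k + 1) - 1) := by
  rw [← prod_mul_distrib]
  exact prod_congr rfl fun i hi =>
    prod_hookLen_mul_prod_betaGap (fun k => q ^ k - 1) (fun i j => hanti i j) (mem_range.mp hi)

/-- Hook-length product identity in terms of beta numbers: for a partition `σ` with
`L`-beta numbers `β_i = σ_i + L - i`,
`∏_{(i,j)∈[σ]} (q^{h_{ij}} - 1) · ∏_{i<j} (q^{β_i-β_j} - 1) = ∏_i ∏_{k=1}^{β_i} (q^k - 1)`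
(the cross-multiplied form of the displayed quotient identity). -/
theorem hook_length_beta_identity {R : Type*} [CommRing R] (q : R)
    (σ : ℕ → ℕ) (L : ℕ)
    (hanti : ∀ i j, i ≤ j → σ j ≤ σ i)
    (hvan : ∀ i, L ≤ i → σ i = 0) :
    (∏ i ∈ Finset.range L, ∏ j ∈ Finset.range (σ i),
        (q ^ (σ i + ((Finset.range L).filter (fun i' => j < σ i')).card - (i + j + 1)) - 1)) *
      (∏ i ∈ Finset.range L, ∏ j ∈ Finset.Ioo i L,
        (q ^ ((σ i + (L - 1 - i)) - (σ j + (L - 1 - j))) - 1))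
      = ∏ i ∈ Finset.range L, ∏ k ∈ Finset.range (σ i + (L - 1 - i)),
          (q ^ (k + 1) - 1) :=
  hook_length_beta_identity_general q σ L hanti
end

section
/- The trace form τ on the Ariki–Koike algebra satisfies, for x, y ∈ S_n and 0 ≤ c_i < r: τ(L_1^{c_1}···L_n^{c_n} T_x T_y) = q^{ℓ(x)} if all c_i = 0 and x = y^{−1}, and 0 otherwise. -/
/-!
Write `y = y' s_i` with `ℓ(y) = ℓ(y') + 1`, so that `T_y = T_i T_{y'}`, and put
`A = L_1^{c_1}⋯L_n^{c_n}`. If `ℓ(s_i x) > ℓ(x)` then `T_x T_i = T_{s_i x}`; otherwise `x = s_i x'`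
with `ℓ(x') < ℓ(x)`, and the quadratic relation gives `T_x T_i = (1 - q) T_x + q T_{x'}`. Induction
on `ℓ(y)` therefore reduces `τ(A T_x T_y)` to the values `τ(A T_w)` fixed by the definition of `τ`;
comparing lengths shows that only the terms with `x = y⁻¹` survive, each step contributing a
factor `q`.
-/

/-- Number of inversions (= Coxeter length) of a permutation of `Fin n`. -/
def invLength {n : ℕ} (w : Equiv.Perm (Fin n)) : ℕ :=
  ((Finset.univ : Finset (Fin n × Fin n)).filter (fun p => p.1 < p.2 ∧ w p.2 < w p.1)).card

/-- The adjacent transposition `s_i` (1-based), as a permutation of `Fin n`. -/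
def adjSwap (n i : ℕ) : Equiv.Perm (Fin n) :=
  if h : 1 ≤ i ∧ i < n then Equiv.swap ⟨i - 1, by omega⟩ ⟨i, h.2⟩ else 1

open Equiv Finset

namespace Equiv.Perm

variable {n : ℕ}

lemma invLength_one : invLength (1 : Perm (Fin n)) = 0 := by
  rw [invLength, card_eq_zero, filter_eq_empty_iff]
  exact fun p _ h => lt_asymm h.1 h.2

lemma invLength_inv (w : Perm (Fin n)) : invLength w⁻¹ = invLength w := by
  apply card_nbij' (fun p => (w⁻¹ p.2, w⁻¹ p.1)) (fun p => (w p.2, w p.1)) <;>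
    simp +contextual [Set.MapsTo, Set.LeftInvOn]

lemma swap_lt_swap_iff {a b x y : Fin n} (hab : (a : ℕ) + 1 = b) (hxy : (x, y) ≠ (a, b))
    (hyx : (x, y) ≠ (b, a)) : swap a b x < swap a b y ↔ x < y := by
  simp only [ne_eq, Prod.mk.injEq, Fin.ext_iff] at hxy hyx
  simp only [Fin.lt_def, swap_apply_def, apply_ite Fin.val, Fin.ext_iff]
  split_ifs <;> omega

/-- Right multiplication by the adjacent transposition `swap a b` creates the inversion `(a, b)`
or removes it, and permutes all other inversions. -/
lemma invLength_mul_swap_add {w : Perm (Fin n)} {a b : Fin n} (hab : (a : ℕ) + 1 = b) :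
    invLength (w * swap a b) + (if w b < w a then 1 else 0) =
      invLength w + (if w a < w b then 1 else 0) := by
  have hlt : a < b := by rw [Fin.lt_def]; omega
  have hpoint : ∀ p : Fin n × Fin n,
      (if swap a b p.1 < swap a b p.2 ∧ w p.2 < w p.1 then 1 else 0) +
          (if p = (a, b) then (if w b < w a then 1 else 0) else 0) =
        (if p.1 < p.2 ∧ w p.2 < w p.1 then 1 else 0) +
          (if p = (b, a) then (if w a < w b then 1 else 0) else 0) := by
    rintro ⟨x, y⟩
    by_cases hxy : (x, y) = (a, b)
    · simp_all [hlt.ne', not_lt_of_gt hlt]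
    by_cases hyx : (x, y) = (b, a)
    · simp_all [hlt.ne', not_lt_of_gt hlt]
    simp [swap_lt_swap_iff hab hxy hyx, hxy, hyx]
  have hreindex : invLength (w * swap a b) =
      ∑ p : Fin n × Fin n, if swap a b p.1 < swap a b p.2 ∧ w p.2 < w p.1 then 1 else 0 := by
    rw [invLength, card_filter, ← (Equiv.prodCongr (swap a b) (swap a b)).sum_comp]
    simp
  rw [hreindex, invLength, card_filter]
  simpa [sum_add_distrib] using Fintype.sum_congr _ _ hpoint

lemma adjSwap_mul_self (n i : ℕ) : adjSwap n i * adjSwap n i = 1 := by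
  unfold adjSwap; split_ifs <;> simp

lemma adjSwap_mul_adjSwap_mul (n i : ℕ) (w : Perm (Fin n)) :
    adjSwap n i * (adjSwap n i * w) = w := by
  rw [← mul_assoc, adjSwap_mul_self, one_mul]

lemma adjSwap_inv (n i : ℕ) : (adjSwap n i)⁻¹ = adjSwap n i :=
  inv_eq_of_mul_eq_one_right (adjSwap_mul_self n i)

lemma adjSwap_eq_swap {a b : Fin n} (hab : (a : ℕ) + 1 = b) : adjSwap n b = swap a b := by
  rw [adjSwap, dif_pos ⟨by omega, b.2⟩]
  congr 1
  ext
  simp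
  omega

lemma invLength_mul_adjSwap_cases (w : Perm (Fin n)) {i : ℕ} (hi : 1 ≤ i) (hin : i < n) :
    invLength (w * adjSwap n i) = invLength w + 1 ∨
      invLength (w * adjSwap n i) + 1 = invLength w := by
  let a : Fin n := ⟨i - 1, by omega⟩
  let b : Fin n := ⟨i, hin⟩
  have hab : (a : ℕ) + 1 = b := by simp [a, b]; omega
  have hlen := invLength_mul_swap_add (w := w) hab
  rw [← show adjSwap n i = swap a b from adjSwap_eq_swap hab] at hlen
  have hne : w a ≠ w b := w.injective.ne (by simp [a, b, Fin.ext_iff]; omega)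
  rcases hne.lt_or_gt with h | h <;> simp [h, not_lt_of_gt h] at hlen <;> omega

lemma invLength_adjSwap_mul (w : Perm (Fin n)) (i : ℕ) :
    invLength (adjSwap n i * w) = invLength (w⁻¹ * adjSwap n i) := by
  rw [← invLength_inv, mul_inv_rev, adjSwap_inv]

lemma exists_adjacent_inversion_of_ne_one {w : Perm (Fin n)} (hw : w ≠ 1) :
    ∃ a b : Fin n, (a : ℕ) + 1 = b ∧ w b < w a := by
  by_contra! hmono
  refine hw (Equiv.ext fun x => congrFun (StrictMono.eq_id ?_) x)
  cases n with
  | zero => exact x.elim0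
  | succ m =>
    refine Fin.strictMono_iff_lt_succ.2 fun j => (hmono _ _ (by simp)).lt_of_ne ?_
    exact w.injective.ne Fin.castSucc_lt_succ.ne

lemma exists_invLength_mul_adjSwap_lt {w : Perm (Fin n)} (hw : w ≠ 1) :
    ∃ i, 1 ≤ i ∧ i < n ∧ invLength (w * adjSwap n i) + 1 = invLength w := by
  obtain ⟨a, b, hab, hba⟩ := exists_adjacent_inversion_of_ne_one hw
  have hlen := invLength_mul_swap_add (w := w) hab
  rw [← adjSwap_eq_swap hab] at hlen
  exact ⟨b, by omega, b.2, by simpa [hba, not_lt_of_gt hba] using hlen⟩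

lemma invLength_adjSwap_mul_cases (w : Perm (Fin n)) {i : ℕ} (hi : 1 ≤ i) (hin : i < n) :
    invLength (adjSwap n i * w) = invLength w + 1 ∨
      invLength (adjSwap n i * w) + 1 = invLength w := by
  rw [invLength_adjSwap_mul, ← invLength_inv w]
  exact invLength_mul_adjSwap_cases w⁻¹ hi hin

lemma exists_invLength_adjSwap_mul_lt {w : Perm (Fin n)} (hw : w ≠ 1) :
    ∃ i, 1 ≤ i ∧ i < n ∧ invLength (adjSwap n i * w) + 1 = invLength w := by
  obtain ⟨i, hi, hin, hlen⟩ := exists_invLength_mul_adjSwap_lt (inv_ne_one.2 hw)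
  refine ⟨i, hi, hin, ?_⟩
  rwa [invLength_adjSwap_mul, ← invLength_inv w]

@[elab_as_elim]
lemma induction_on_adjSwap_mul {motive : Perm (Fin n) → Prop} (w : Perm (Fin n))
    (one : motive 1)
    (adjSwap_mul : ∀ w i, 1 ≤ i → i < n →
      invLength (adjSwap n i * w) = invLength w + 1 → motive w → motive (adjSwap n i * w)) :
    motive w := by
  induction hw : invLength w using Nat.strong_induction_on generalizing w with
  | _ N ih =>
    rcases eq_or_ne w 1 with rfl | hw1
    · exact one
    obtain ⟨i, hi, hin, hlen⟩ := exists_invLength_adjSwap_mul_lt hw1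
    rw [← adjSwap_mul_adjSwap_mul n i w]
    exact adjSwap_mul _ i hi hin (by rw [adjSwap_mul_adjSwap_mul]; omega) (ih _ (by omega) _ rfl)

@[elab_as_elim]
lemma induction_on_mul_adjSwap {motive : Perm (Fin n) → Prop} (w : Perm (Fin n))
    (one : motive 1)
    (mul_adjSwap : ∀ w i, 1 ≤ i → i < n →
      invLength (w * adjSwap n i) = invLength w + 1 → motive w → motive (w * adjSwap n i)) :
    motive w := by
  rw [← inv_inv w]
  induction w⁻¹ using induction_on_adjSwap_mul with
  | one => simpa using one
  | adjSwap_mul v i hi hin hlen ih =>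
    rw [mul_inv_rev, adjSwap_inv]
    refine mul_adjSwap _ i hi hin ?_ ih
    rwa [invLength_inv, ← invLength_adjSwap_mul]

end Equiv.Perm

open Equiv.Perm

section Hecke

variable {R H : Type*} [CommRing R] [Ring H] [Algebra R H]

lemma mul_mul_self_of_quadratic {q : R} {t : H} (ht : (t + algebraMap R H q) * (t - 1) = 0)
    (z : H) : z * t * t = (1 - q) • (z * t) + q • z := by
  have hsq : t * t = (1 - q) • t + q • 1 := by
    rw [← sub_eq_zero, ← ht, sub_smul, one_smul, Algebra.smul_def, Algebra.smul_def, mul_one]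
    noncomm_ring
  rw [mul_assoc, hsq, mul_add, mul_smul_comm, mul_smul_comm, mul_one]

variable {n : ℕ} {T : ℕ → H} {Tw : Perm (Fin n) → H}

lemma Tw_mul_adjSwap (hTw1 : Tw 1 = 1)
    (hTwmul : ∀ w i, 1 ≤ i → i < n →
      invLength (adjSwap n i * w) = invLength w + 1 → Tw (adjSwap n i * w) = Tw w * T i)
    (w : Perm (Fin n)) {i : ℕ} (hi : 1 ≤ i) (hin : i < n)
    (hlen : invLength (w * adjSwap n i) = invLength w + 1) :
    Tw (w * adjSwap n i) = T i * Tw w := by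
  induction w using induction_on_adjSwap_mul generalizing i with
  | one => simpa [hTw1] using hTwmul 1 i hi hin (by simpa using hlen)
  | adjSwap_mul v j hj hjn hvlen ih =>
    have hup : invLength (v * adjSwap n i) = invLength v + 1 := by
      have := invLength_adjSwap_mul_cases (v * adjSwap n i) hj hjn
      rcases invLength_mul_adjSwap_cases v hi hin with h | h
      · exact h
      · rw [mul_assoc] at hlen
        omega
    rw [mul_assoc, hTwmul _ j hj hjn (by rw [← mul_assoc, hlen, hvlen, hup]), ih hi hin hup,
      hTwmul v j hj hjn hvlen, mul_assoc]

lemma trace_mul_Tw_mul_Tw {q : R} {τ : H →ₗ[R] R} {A : H} {p : Prop} [Decidable p]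
    (hTw1 : Tw 1 = 1)
    (hTwmul : ∀ w i, 1 ≤ i → i < n →
      invLength (adjSwap n i * w) = invLength w + 1 → Tw (adjSwap n i * w) = Tw w * T i)
    (hquad : ∀ i, 1 ≤ i → i < n → (T i + algebraMap R H q) * (T i - 1) = 0)
    (hτ : ∀ w, τ (A * Tw w) = if p ∧ w = 1 then 1 else 0) (x y : Perm (Fin n)) :
    τ (A * Tw x * Tw y) = if p ∧ x = y⁻¹ then q ^ invLength x else 0 := by
  induction y using induction_on_mul_adjSwap generalizing x with
  | one => simp +contextual [hTw1, hτ, invLength_one]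
  | mul_adjSwap y i hi hin hylen ih =>
    have hiff (x : Perm (Fin n)) : adjSwap n i * x = y⁻¹ ↔ x = (y * adjSwap n i)⁻¹ := by
      rw [mul_inv_rev, eq_inv_mul_iff_mul_eq]
    rw [Tw_mul_adjSwap hTw1 hTwmul y hi hin hylen, ← mul_assoc]
    rcases invLength_adjSwap_mul_cases x hi hin with hx | hx
    · have hne : x ≠ (y * adjSwap n i)⁻¹ := fun h => by
        have h₁ : invLength x = invLength y + 1 := by rw [h, invLength_inv, hylen]
        have h₂ : invLength (adjSwap n i * x) = invLength y := by rw [(hiff x).2 h, invLength_inv]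
        omega
      rw [mul_assoc A, ← hTwmul x i hi hin hx, ih]
      simp only [hiff, hne, and_false, if_false]
    · obtain ⟨x, rfl⟩ : ∃ x', x = adjSwap n i * x' := ⟨_, (adjSwap_mul_adjSwap_mul n i x).symm⟩
      rw [adjSwap_mul_adjSwap_mul] at hx
      have hexpand : A * Tw (adjSwap n i * x) * T i =
          (1 - q) • (A * Tw (adjSwap n i * x)) + q • (A * Tw x) := by
        rw [hTwmul x i hi hin hx.symm, ← mul_assoc, mul_mul_self_of_quadratic (hquad i hi hin)]
      have hne : adjSwap n i * x ≠ y⁻¹ := fun h => by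
        have h₁ : invLength (adjSwap n i * x) = invLength y := by rw [h, invLength_inv]
        have h₂ : invLength x = invLength y + 1 := by rw [(hiff x).1 h, invLength_inv, hylen]
        omega
      have hiff' : x = y⁻¹ ↔ adjSwap n i * x = (y * adjSwap n i)⁻¹ := by
        rw [← hiff, adjSwap_mul_adjSwap_mul]
      rw [hexpand, add_mul, smul_mul_assoc, smul_mul_assoc, map_add, map_smul, map_smul, ih, ih]
      simp only [hne, hiff', and_false, if_false, smul_zero, zero_add, ← hx]
      split_ifs <;> simp [pow_succ, mul_comm]

end Hecke

theorem tau_on_products_general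
    {R : Type*} [CommRing R]
    {H : Type*} [Ring H] [Algebra R H]
    (n r : ℕ) (q : R)
    (T : ℕ → H)
    (hrel2 : ∀ i, 1 ≤ i → i + 1 ≤ n → (T i + algebraMap R H q) * (T i - 1) = 0)
    (L : ℕ → H)
    (Tw : Equiv.Perm (Fin n) → H)
    (hTw1 : Tw 1 = 1)
    (hTwmul : ∀ (w : Equiv.Perm (Fin n)) (i : ℕ), 1 ≤ i → i < n →
      invLength (adjSwap n i * w) = invLength w + 1 →
      Tw (adjSwap n i * w) = Tw w * T i)
    (τ : H →ₗ[R] R)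
    (hτval : ∀ (c : Fin n → ℕ), (∀ k, c k < r) → ∀ w : Equiv.Perm (Fin n),
      τ (((List.finRange n).map (fun k => L (k.val + 1) ^ c k)).prod * Tw w)
        = if (∀ k, c k = 0) ∧ w = 1 then 1 else 0) :
    ∀ (c : Fin n → ℕ), (∀ k, c k < r) → ∀ x y : Equiv.Perm (Fin n),
      τ (((List.finRange n).map (fun k => L (k.val + 1) ^ c k)).prod * Tw x * Tw y)
        = if (∀ k, c k = 0) ∧ x = y⁻¹ then q ^ invLength x else 0 :=
  fun c hc x y => trace_mul_Tw_mul_Tw hTw1 hTwmul hrel2 (hτval c hc) x y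

/-- The trace form `τ` of the Ariki–Koike algebra satisfies
`τ(L_1^{c_1}⋯L_n^{c_n} T_x T_y) = q^{ℓ(x)}` if all `c_i = 0` and `x = y⁻¹`, and `= 0`
otherwise. -/
theorem tau_on_products
    {R : Type*} [CommRing R] [IsDomain R]
    {H : Type*} [Ring H] [Algebra R H]
    (n r : ℕ) (q qi : R) (hq : q * qi = 1) (Q : Fin r → R)
    (T : ℕ → H)
    (hrel0 : (List.ofFn (fun s : Fin r => T 0 - algebraMap R H (Q s))).prod = 0)
    (hrel1 : T 0 * T 1 * T 0 * T 1 = T 1 * T 0 * T 1 * T 0)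
    (hrel2 : ∀ i, 1 ≤ i → i + 1 ≤ n → (T i + algebraMap R H q) * (T i - 1) = 0)
    (hrel3 : ∀ i, 1 ≤ i → i + 2 ≤ n → T (i + 1) * T i * T (i + 1) = T i * T (i + 1) * T i)
    (hrel4 : ∀ i j, i + 1 < j → j + 1 ≤ n → T i * T j = T j * T i)
    (L : ℕ → H)
    (hL1 : L 1 = T 0)
    (hLrec : ∀ m, 1 ≤ m → L (m + 1) = qi • (T m * L m * T m))
    (Tw : Equiv.Perm (Fin n) → H)
    (hTw1 : Tw 1 = 1)
    (hTwmul : ∀ (w : Equiv.Perm (Fin n)) (i : ℕ), 1 ≤ i → i < n →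
      invLength (adjSwap n i * w) = invLength w + 1 →
      Tw (adjSwap n i * w) = Tw w * T i)
    (τ : H →ₗ[R] R)
    (hτval : ∀ (c : Fin n → ℕ), (∀ k, c k < r) → ∀ w : Equiv.Perm (Fin n),
      τ (((List.finRange n).map (fun k => L (k.val + 1) ^ c k)).prod * Tw w)
        = if (∀ k, c k = 0) ∧ w = 1 then 1 else 0)
    (hτtr : ∀ h₁ h₂ : H, τ (h₁ * h₂) = τ (h₂ * h₁)) :
    ∀ (c : Fin n → ℕ), (∀ k, c k < r) → ∀ x y : Equiv.Perm (Fin n),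
      τ (((List.finRange n).map (fun k => L (k.val + 1) ^ c k)).prod * Tw x * Tw y)
        = if (∀ k, c k = 0) ∧ x = y⁻¹ then q ^ invLength x else 0 :=
  tau_on_products_general n r q T hrel2 L Tw hTw1 hTwmul τ hτval
end
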